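/- arXiv:1108.4886 — 2 statements merged into one kernel-verified Lean document; each statement's English description precedes it below -/
import Mathlib

section
/- Let σ ≠ 0, μ_C ≥ 0, μ_F > 0, α ∈ (0,1), set μ̃ := μ_C + σ²/2, and define β_± := −μ̃/σ² ± √((μ̃/σ²)² + 2μ_F/σ²). Then 2μ_F − σ²β₋ − ασ²(1+β₊) > 0. -/
/-!
Write `m = μ̃/σ²` and `R = √(m² + 2μ_F/σ²)`, so that `β_± = −m ± R`. Then
`2μ_F − σ²β₋ − ασ²(1+β₊) = 2μ_F + (1+α)μ̃ + (1−α)σ²R − ασ²`, and since `R ≥ m` and `α < 1`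
this is at least `2μ_F + 2μ̃ − ασ² = 2μ_F + 2μ_C + (1−α)σ² > 0`.
-/

lemma Real.le_sqrt_sq_add (x : ℝ) {c : ℝ} (hc : 0 ≤ c) : x ≤ √(x ^ 2 + c) :=
  Real.le_sqrt_of_sq_le (le_add_of_nonneg_right hc)

/-- For `σ ≠ 0`, `μ_C ≥ 0`, `μ_F > 0`, `α ∈ (0,1)`, `μ̃ = μ_C + σ²/2` and
`β_± = −μ̃/σ² ± √((μ̃/σ²)² + 2μ_F/σ²)`, one has `2μ_F − σ²β₋ − ασ²(1+β₊) > 0`. -/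
theorem stmt_9 (σ μC μF α : ℝ) (hσ : σ ≠ 0) (hμC : 0 ≤ μC) (hμF : 0 < μF)
    (hα : α ∈ Set.Ioo (0:ℝ) 1)
    (μt βp βm : ℝ) (hμt : μt = μC + σ ^ 2 / 2)
    (hβp : βp = -μt / σ ^ 2 + Real.sqrt ((μt / σ ^ 2) ^ 2 + 2 * μF / σ ^ 2))
    (hβm : βm = -μt / σ ^ 2 - Real.sqrt ((μt / σ ^ 2) ^ 2 + 2 * μF / σ ^ 2)) :
    0 < 2 * μF - σ ^ 2 * βm - α * σ ^ 2 * (1 + βp) := by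
  have hσ2 : 0 < σ ^ 2 := by positivity
  have hα1 : 0 < 1 - α := sub_pos.2 hα.2
  set m := μt / σ ^ 2
  set R := Real.sqrt (m ^ 2 + 2 * μF / σ ^ 2)
  have hmR : m ≤ R := Real.le_sqrt_sq_add m (by positivity)
  have hσm : σ ^ 2 * m = μt := mul_div_cancel₀ μt hσ2.ne'
  have hβ : βp = -m + R ∧ βm = -m - R := by rw [hβp, hβm, neg_div]; exact ⟨rfl, rfl⟩
  obtain ⟨rfl, rfl⟩ := hβ
  calc 0 < 2 * μF + 2 * μC + (1 - α) * σ ^ 2 := by positivity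
    _ = 2 * μF + (1 + α) * μt + (1 - α) * (σ ^ 2 * m) - α * σ ^ 2 := by rw [hσm, hμt]; ring
    _ ≤ 2 * μF + (1 + α) * μt + (1 - α) * (σ ^ 2 * R) - α * σ ^ 2 := by gcongr
    _ = 2 * μF - σ ^ 2 * (-m - R) - α * σ ^ 2 * (1 + (-m + R)) := by rw [← hσm]; ring
end

section
/- Let σ ≠ 0, μ_C ≥ 0, μ_F > 0, α ∈ (0,1), set μ̃ := μ_C + σ²/2, define β_± := −μ̃/σ² ± √((μ̃/σ²)² + 2μ_F/σ²), and let a := (2/(2μ_F − σ²β₋ − ασ²(1+β₊)))^{1/(1−α)}. Then a > 0, a^{α−1} = μ_F·(1+β₊)(α+β₋)/(β₊·β₋), and (1/μ_F)·a^{α−1}·(β₊·β₋)/((1+β₊)(α+β₋)) = 1 (all powers being real powers). -/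
/-!
The two exponents are `β_± = -t ± √(t² + c)` with `t = μ̃/σ²` and `c = 2μ_F/σ²`, so Vieta gives
`σ²β₊β₋ = -2μ_F`, which turns the denominator `2μ_F − σ²β₋ − ασ²(1+β₊)` into
`−σ²(1+β₊)(α+β₋)`. Since `√(t² + c) > |t|`, we get `β₊ > 0` and `β₋ < -2t ≤ -1`, so this
denominator is positive, `a` is a positive real power, and `a^(α−1)` is the reciprocal of the base.
-/

open Real

lemma abs_lt_sqrt_sq_add (t : ℝ) {c : ℝ} (hc : 0 < c) : |t| < √(t ^ 2 + c) :=
  (lt_sqrt (abs_nonneg t)).2 (by rw [sq_abs]; linarith)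

lemma neg_add_sqrt_sq_add_pos (t : ℝ) {c : ℝ} (hc : 0 < c) : 0 < -t + √(t ^ 2 + c) := by
  linarith [le_abs_self t, abs_lt_sqrt_sq_add t hc]

lemma neg_sub_sqrt_sq_add_lt (t : ℝ) {c : ℝ} (hc : 0 < c) : -t - √(t ^ 2 + c) < -2 * t := by
  linarith [le_abs_self t, abs_lt_sqrt_sq_add t hc]

lemma neg_add_sqrt_mul_neg_sub_sqrt {t c : ℝ} (hc : 0 ≤ t ^ 2 + c) :
    (-t + √(t ^ 2 + c)) * (-t - √(t ^ 2 + c)) = -c := by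
  linear_combination -sq_sqrt hc

lemma rpow_one_div_one_sub_rpow_sub_one {x α : ℝ} (hx : 0 ≤ x) (hα : α ≠ 1) :
    (x ^ (1 / (1 - α))) ^ (α - 1) = x⁻¹ := by
  have hexp : 1 / (1 - α) * (α - 1) = -1 := by
    field_simp [sub_ne_zero.2 hα.symm]
    ring
  rw [← rpow_mul hx, hexp, rpow_neg_one]

/-- For `σ ≠ 0`, `μ_C ≥ 0`, `μ_F > 0`, `α ∈ (0,1)`, `μ̃ = μ_C + σ²/2`,
`β_± = −μ̃/σ² ± √((μ̃/σ²)² + 2μ_F/σ²)` and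
`a = (2/(2μ_F − σ²β₋ − ασ²(1+β₊)))^(1/(1−α))`, one has `a > 0`,
`a^(α−1) = μ_F(1+β₊)(α+β₋)/(β₊β₋)` and
`(1/μ_F)·a^(α−1)·(β₊β₋)/((1+β₊)(α+β₋)) = 1` (real powers). -/
theorem stmt_10 (σ μC μF α : ℝ) (hσ : σ ≠ 0) (hμC : 0 ≤ μC) (hμF : 0 < μF)
    (hα : α ∈ Set.Ioo (0:ℝ) 1)
    (μt βp βm a : ℝ) (hμt : μt = μC + σ ^ 2 / 2)
    (hβp : βp = -μt / σ ^ 2 + Real.sqrt ((μt / σ ^ 2) ^ 2 + 2 * μF / σ ^ 2))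
    (hβm : βm = -μt / σ ^ 2 - Real.sqrt ((μt / σ ^ 2) ^ 2 + 2 * μF / σ ^ 2))
    (ha : a = (2 / (2 * μF - σ ^ 2 * βm - α * σ ^ 2 * (1 + βp))) ^ (1 / (1 - α))) :
    0 < a ∧
    a ^ (α - 1) = μF * ((1 + βp) * (α + βm)) / (βp * βm) ∧
    (1 / μF) * a ^ (α - 1) * (βp * βm) / ((1 + βp) * (α + βm)) = 1 := by
  obtain ⟨hα0, hα1⟩ := hα
  have hσ2 : 0 < σ ^ 2 := by positivity
  have hc : 0 < 2 * μF / σ ^ 2 := by positivity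
  have ht : 1 / 2 ≤ μt / σ ^ 2 := by
    rw [le_div_iff₀ hσ2, hμt]
    linarith
  rw [neg_div] at hβp hβm
  have hβp0 : 0 < βp := hβp ▸ neg_add_sqrt_sq_add_pos _ hc
  have hβm1 : βm < -1 := by linarith [hβm ▸ neg_sub_sqrt_sq_add_lt _ hc]
  have hvieta : σ ^ 2 * (βp * βm) = -(2 * μF) := by
    rw [hβp, hβm, neg_add_sqrt_mul_neg_sub_sqrt (by positivity)]
    field_simp
  have hden : 2 * μF - σ ^ 2 * βm - α * σ ^ 2 * (1 + βp)
      = -(σ ^ 2 * ((1 + βp) * (α + βm))) := by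
    linear_combination hvieta
  have hβp1 : 0 < 1 + βp := by linarith
  have hαβm : α + βm < 0 := by linarith
  have hβm0 : βm < 0 := by linarith
  have hbase : 0 < 2 / (2 * μF - σ ^ 2 * βm - α * σ ^ 2 * (1 + βp)) := by
    rw [hden]
    exact div_pos two_pos (neg_pos.2 (mul_neg_of_pos_of_neg hσ2 (mul_neg_of_pos_of_neg hβp1 hαβm)))
  have hapow : a ^ (α - 1) = μF * ((1 + βp) * (α + βm)) / (βp * βm) := by
    rw [ha, rpow_one_div_one_sub_rpow_sub_one hbase.le hα1.ne, inv_div, hden,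
      eq_div_iff (mul_ne_zero hβp0.ne' hβm0.ne)]
    linear_combination (-(1 + βp) * (α + βm) / 2) * hvieta
  refine ⟨ha ▸ rpow_pos_of_pos hbase _, hapow, ?_⟩
  rw [hapow]
  field_simp [hβp1.ne', hαβm.ne, hβp0.ne', hβm0.ne]
end
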